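/- Let n ≥ 1, let R₀ ∈ SO(n) and let Z ∈ so(n). If the matrix I − ZᵀZ is positive definite, then C(Z) := √(I − ZᵀZ) − I is symmetric and R₀(I + Z + C(Z)) ∈ SO(n); that is, (I + Z + C(Z))ᵀ(I + Z + C(Z)) = I and det(R₀(I + Z + C(Z))) = 1. -/

import Mathlib

/-!
Write `S = √(I - ZᵀZ)`. Since `Z` is skew, `I - ZᵀZ = I + Z²` commutes with `Z`, hence so
does its square root, and `(S + Z)ᵀ (S + Z) = (S - Z)(S + Z) = S² - Z² = I`. An orthogonal
matrix of determinant `-1` has `-1` as an eigenvalue, which is impossible for `S + Z`: its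
quadratic form is that of the positive semidefinite `S`, the skew part contributing nothing.
-/

open Matrix

open scoped ComplexOrder in
/-- The positive semidefinite square root of a positive semidefinite matrix
(the definition `Matrix.PosSemidef.sqrt` of the older Mathlib, since removed). -/
noncomputable def Matrix.PosSemidef.sqrt {n : Type*} [Fintype n] [DecidableEq n] {𝕜 : Type*} [RCLike 𝕜]
    {A : Matrix n n 𝕜} (hA : A.PosSemidef) : Matrix n n 𝕜 :=
  hA.1.eigenvectorUnitary.1 * diagonal ((↑) ∘ (√·) ∘ hA.1.eigenvalues) *
  (star hA.1.eigenvectorUnitary : Matrix n n 𝕜)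

namespace Matrix

namespace PosSemidef

open scoped ComplexOrder MatrixOrder

variable {n 𝕜 : Type*} [Fintype n] [DecidableEq n] [RCLike 𝕜] {A : Matrix n n 𝕜}

lemma sqrt_eq_cfc (hA : A.PosSemidef) : hA.sqrt = cfc Real.sqrt A := by
  rw [hA.1.cfc_eq, IsHermitian.cfc, Unitary.conjStarAlgAut_apply]
  rfl

lemma posSemidef_sqrt (hA : A.PosSemidef) : hA.sqrt.PosSemidef := by
  rw [sqrt_eq_cfc, ← nonneg_iff_posSemidef]
  exact cfc_nonneg fun x _ => Real.sqrt_nonneg x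

lemma sqrt_mul_self (hA : A.PosSemidef) : hA.sqrt * hA.sqrt = A := by
  have hA' : 0 ≤ A := nonneg_iff_posSemidef.mpr hA
  rw [sqrt_eq_cfc, ← cfc_mul ..]
  conv_rhs => rw [← cfc_id' ℝ A]
  exact cfc_congr fun x hx => Real.mul_self_sqrt (spectrum_nonneg_of_nonneg hA' hx)

lemma commute_sqrt (hA : A.PosSemidef) {B : Matrix n n 𝕜} (hB : Commute A B) :
    Commute hA.sqrt B :=
  hA.sqrt_eq_cfc ▸ hB.cfc_real _

end PosSemidef

lemma dotProduct_mulVec_self_eq_zero_of_transpose_eq_neg {n R : Type*} [Fintype n] [CommRing R]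
    [NoZeroDivisors R] [CharZero R] {Z : Matrix n n R} (hZ : Zᵀ = -Z) (v : n → R) :
    v ⬝ᵥ Z *ᵥ v = 0 := by
  have h : v ⬝ᵥ Z *ᵥ v = -(v ⬝ᵥ Z *ᵥ v) := by
    conv_lhs => rw [dotProduct_mulVec, ← mulVec_transpose, hZ, neg_mulVec, neg_dotProduct,
      dotProduct_comm]
  exact self_eq_neg.mp h

lemma det_eq_one_of_transpose_mul_self_of_dotProduct_mulVec_nonneg {n R : Type*} [Fintype n]
    [DecidableEq n] [Field R] [LinearOrder R] [IsStrictOrderedRing R] {M : Matrix n n R}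
    (hM : Mᵀ * M = 1) (hM_nonneg : ∀ v, 0 ≤ v ⬝ᵥ M *ᵥ v) : M.det = 1 := by
  have hsq : M.det * M.det = 1 := by simpa [det_mul, det_transpose] using congrArg det hM
  refine (mul_self_eq_one_iff.mp hsq).resolve_right fun hneg => ?_
  -- `Mᵀ (M + 1) = (M + 1)ᵀ`, so `det M = -1` makes `-1` an eigenvalue of `M`
  have hsing : (M + 1).det = 0 := by
    have e : Mᵀ * (M + 1) = (M + 1)ᵀ := by
      rw [mul_add, hM, mul_one, transpose_add, transpose_one, add_comm]
    have := congrArg det e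
    rw [det_mul, det_transpose, det_transpose, hneg] at this
    linarith
  obtain ⟨v, hv, hMv⟩ := exists_mulVec_eq_zero_iff.mpr hsing
  rw [add_mulVec, one_mulVec, add_eq_zero_iff_eq_neg] at hMv
  have hvv : 0 < v ⬝ᵥ v := (Finset.sum_nonneg fun i _ => mul_self_nonneg (v i)).lt_of_ne'
    (mt dotProduct_self_eq_zero.mp hv)
  have := hM_nonneg v
  rw [hMv, dotProduct_neg] at this
  linarith

end Matrix

theorem stmt0_general {n : ℕ} (R₀ Z : Matrix (Fin n) (Fin n) ℝ)
    (hR₀det : R₀.det = 1)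
    (hZ : Zᵀ = -Z)
    (hpd : (1 - Zᵀ * Z).PosDef) :
    (hpd.posSemidef.sqrt - 1)ᵀ = hpd.posSemidef.sqrt - 1 ∧
    (1 + Z + (hpd.posSemidef.sqrt - 1))ᵀ * (1 + Z + (hpd.posSemidef.sqrt - 1)) = 1 ∧
    (R₀ * (1 + Z + (hpd.posSemidef.sqrt - 1))).det = 1 := by
  set hA := hpd.posSemidef
  set S := hA.sqrt
  have hS : Sᵀ = S := (isHermitian_iff_isSymm.mp hA.posSemidef_sqrt.1).eq
  have hSZ : S * Z = Z * S :=
    hA.commute_sqrt <| (commute_iff_eq _ _).mpr <| by rw [hZ]; noncomm_ring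
  have hM : 1 + Z + (S - 1) = S + Z := by abel
  have horth : (S + Z)ᵀ * (S + Z) = 1 := by
    rw [transpose_add, hS, hZ]
    calc (S + -Z) * (S + Z) = S * S - Z * Z + (S * Z - Z * S) := by noncomm_ring
      _ = 1 := by rw [hA.sqrt_mul_self, hSZ, hZ]; noncomm_ring
  refine ⟨by rw [transpose_sub, hS, transpose_one], hM ▸ horth, ?_⟩
  rw [det_mul, hR₀det, one_mul, hM]
  refine det_eq_one_of_transpose_mul_self_of_dotProduct_mulVec_nonneg horth fun v => ?_
  rw [add_mulVec, dotProduct_add, dotProduct_mulVec_self_eq_zero_of_transpose_eq_neg hZ, add_zero]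
  simpa using hA.posSemidef_sqrt.dotProduct_mulVec_nonneg v

/-- For `R₀ ∈ SO(n)` and skew-symmetric `Z` with `I - ZᵀZ` positive
definite, the adjustment `C(Z) = √(I - ZᵀZ) - I` is symmetric and
`R₀ (I + Z + C(Z)) ∈ SO(n)`. -/
theorem stmt0 {n : ℕ} (hn : 1 ≤ n) (R₀ Z : Matrix (Fin n) (Fin n) ℝ)
    (hR₀orth : R₀ᵀ * R₀ = 1) (hR₀det : R₀.det = 1)
    (hZ : Zᵀ = -Z)
    (hpd : (1 - Zᵀ * Z).PosDef) :
    (hpd.posSemidef.sqrt - 1)ᵀ = hpd.posSemidef.sqrt - 1 ∧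
    (1 + Z + (hpd.posSemidef.sqrt - 1))ᵀ * (1 + Z + (hpd.posSemidef.sqrt - 1)) = 1 ∧
    (R₀ * (1 + Z + (hpd.posSemidef.sqrt - 1))).det = 1 :=
  stmt0_general R₀ Z hR₀det hZ hpd
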